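/- arXiv:1205.3982 — 4 statements merged into one kernel-verified Lean document; each statement's English description precedes it below -/
import Mathlib

section
/- Let ε > 0 and let C ⊆ [0,1] be a finite set containing 0 and 1 such that for every two consecutive points c' < c'' of C and every player i, v_i((c', c'')) ≤ ε. Then for every connected division x there exists a connected division y, all of whose cut points belong to C and with the same assignment permutation as x, such that u(y) ≥ u(x) − (n−1)ε. (Lemma 1(2): restricting cuts to the discretization points loses at most (n−1)ε utilitarian welfare.) -/
/-!
Round every cut down to the nearest point of `C` on its left; the first and last cuts stay at
`0` and `1`. The piece `(x_{j-1}, x_j)` is then covered by the rounded piece `(y_{j-1}, y_j)`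
together with `[y_j, x_j)`, and the latter lies in `[y_j, c)` for the successor `c` of `y_j`
in `C`; since the valuations are atomless, it is worth at most `ε` to everybody. Only the
`n - 1` interior cuts move, so at most `(n - 1)ε` is lost in total.
-/

open MeasureTheory Set

/-- Junk value `t` when no point of `C` is at most `t`. -/
noncomputable def roundDown (C : Finset ℝ) (t : ℝ) : ℝ :=
  if h : (C.filter (· ≤ t)).Nonempty then (C.filter (· ≤ t)).max' h else t

section roundDown

variable {C : Finset ℝ} {c s t : ℝ}

lemma roundDown_eq_max' (hc : c ∈ C) (hct : c ≤ t) :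
    roundDown C t = (C.filter (· ≤ t)).max' ⟨c, Finset.mem_filter.2 ⟨hc, hct⟩⟩ :=
  dif_pos _

lemma roundDown_mem (hc : c ∈ C) (hct : c ≤ t) : roundDown C t ∈ C := by
  rw [roundDown_eq_max' hc hct]
  exact (Finset.mem_filter.1 (Finset.max'_mem _ _)).1

lemma roundDown_le (C : Finset ℝ) (t : ℝ) : roundDown C t ≤ t := by
  unfold roundDown
  split_ifs with h
  · exact (Finset.mem_filter.1 (Finset.max'_mem _ h)).2
  · exact le_rfl

lemma le_roundDown (hc : c ∈ C) (hct : c ≤ t) : c ≤ roundDown C t := by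
  rw [roundDown_eq_max' hc hct]
  exact Finset.le_max' _ c (Finset.mem_filter.2 ⟨hc, hct⟩)

lemma roundDown_of_mem (ht : t ∈ C) : roundDown C t = t :=
  le_antisymm (roundDown_le C t) (le_roundDown ht le_rfl)

lemma roundDown_mono (hc : c ∈ C) (hcs : c ≤ s) (hst : s ≤ t) :
    roundDown C s ≤ roundDown C t :=
  le_roundDown (roundDown_mem hc hcs) ((roundDown_le C s).trans hst)

lemma exists_successor_roundDown (hlt : roundDown C t < t)
    {d : ℝ} (hd : d ∈ C) (htd : t ≤ d) :
    ∃ c' ∈ C, roundDown C t < c' ∧ t ≤ c' ∧ ∀ e ∈ C, e ≤ roundDown C t ∨ c' ≤ e := by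
  have hne : (C.filter (roundDown C t < ·)).Nonempty :=
    ⟨d, Finset.mem_filter.2 ⟨hd, hlt.trans_le htd⟩⟩
  obtain ⟨hmem, hgt⟩ := Finset.mem_filter.1 (Finset.min'_mem _ hne)
  refine ⟨_, hmem, hgt, ?_, fun e he => ?_⟩
  · by_contra! hlt'
    exact (le_roundDown hmem hlt'.le).not_gt hgt
  · rcases le_or_gt e (roundDown C t) with hle | hgt'
    · exact Or.inl hle
    · exact Or.inr (Finset.min'_le _ e (Finset.mem_filter.2 ⟨he, hgt'⟩))

lemma measure_Ico_roundDown_le (μ : Measure ℝ) [NullSingletonClass μ] {δ : ENNReal}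
    (hgap : ∀ c' ∈ C, ∀ c'' ∈ C, c' < c'' → (∀ e ∈ C, e ≤ c' ∨ c'' ≤ e) →
      μ (Ioo c' c'') ≤ δ)
    (hc : c ∈ C) (hct : c ≤ t) {d : ℝ} (hd : d ∈ C) (htd : t ≤ d) :
    μ (Ico (roundDown C t) t) ≤ δ := by
  rcases (roundDown_le C t).lt_or_eq with hlt | heq
  · obtain ⟨c', hc', hrc', htc', hcons⟩ := exists_successor_roundDown hlt hd htd
    calc μ (Ico (roundDown C t) t) ≤ μ (Ico (roundDown C t) c') :=
          measure_mono (Ico_subset_Ico_right htc')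
      _ = μ (Ioo (roundDown C t) c') := measure_congr Ioo_ae_eq_Ico.symm
      _ ≤ δ := hgap _ (roundDown_mem hc hct) c' hc' hrc' hcons
  · simp [heq]

end roundDown

lemma toReal_measure_Ioo_le_add (μ : Measure ℝ) {a a' b b' : ℝ} (ha : a' ≤ a)
    (hfin : μ (Ioo a' b') ≠ ⊤) (hfin' : μ (Ico b' b) ≠ ⊤) :
    (μ (Ioo a b)).toReal ≤ (μ (Ioo a' b')).toReal + (μ (Ico b' b)).toReal := by
  have hcover : Ioo a b ⊆ Ioo a' b' ∪ Ico b' b := fun t ht =>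
    (lt_or_ge t b').imp (fun h => ⟨ha.trans_lt ht.1, h⟩) (fun h => ⟨h, ht.2⟩)
  rw [← ENNReal.toReal_add hfin hfin']
  exact ENNReal.toReal_mono (ENNReal.add_ne_top.2 ⟨hfin, hfin'⟩)
    ((measure_mono hcover).trans (measure_union_le _ _))

lemma Fintype.sum_le_card_sub_one_mul {ι : Type*} [Fintype ι] (g : ι → ℝ) {ε : ℝ} (i₀ : ι)
    (hg : ∀ i, g i ≤ ε) (hi₀ : g i₀ = 0) :
    ∑ i, g i ≤ (Fintype.card ι - 1) * ε := by
  classical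
  rw [← Finset.add_sum_erase _ _ (Finset.mem_univ i₀), hi₀, zero_add]
  calc ∑ i ∈ Finset.univ.erase i₀, g i ≤ (Finset.univ.erase i₀).card • ε :=
        Finset.sum_le_card_nsmul _ _ _ fun i _ => hg i
    _ = (Fintype.card ι - 1) * ε := by
        rw [Finset.card_erase_of_mem (Finset.mem_univ _), nsmul_eq_mul, Finset.card_univ,
          Nat.cast_sub (Fintype.card_pos_iff.2 ⟨i₀⟩), Nat.cast_one]

theorem stmt_10_general (n : ℕ) (v : Fin n → Measure ℝ)
    (hatomless : ∀ i, NoAtoms (v i))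
    (hprob : ∀ i, v i (Icc 0 1) = 1)
    (ε : ℝ) (hε : 0 < ε) (C : Finset ℝ)
    (hC0 : (0 : ℝ) ∈ C) (hC1 : (1 : ℝ) ∈ C)
    (hgap : ∀ c' ∈ C, ∀ c'' ∈ C, c' < c'' → (∀ c ∈ C, c ≤ c' ∨ c'' ≤ c) →
      ∀ i, v i (Ioo c' c'') ≤ ENNReal.ofReal ε)
    (x : Fin (n + 1) → ℝ) (hx : Monotone x) (hx0 : x 0 = 0)
    (hx1 : x (Fin.last n) = 1) (π : Equiv.Perm (Fin n)) :
    ∃ y : Fin (n + 1) → ℝ,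
      Monotone y ∧ y 0 = 0 ∧ y (Fin.last n) = 1 ∧ (∀ j, y j ∈ C) ∧
      (∑ i, (v i (Ioo (x (π.symm i).castSucc) (x (π.symm i).succ))).toReal)
          - (n - 1) * ε ≤
        ∑ i, (v i (Ioo (y (π.symm i).castSucc) (y (π.symm i).succ))).toReal := by
  obtain ⟨m, rfl⟩ : ∃ m, n = m + 1 := Nat.exists_eq_succ_of_ne_zero fun h => by
    subst h; exact zero_ne_one (hx0.symm.trans hx1)
  have hx_nonneg (j) : 0 ≤ x j := hx0 ▸ hx (Fin.zero_le j)
  have hx_le_one (j) : x j ≤ 1 := hx1 ▸ hx (Fin.le_last j)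
  set y := fun j => roundDown C (x j)
  refine ⟨y, fun j k hjk => roundDown_mono hC0 (hx_nonneg j) (hx hjk),
    by simp [y, hx0, roundDown_of_mem hC0], by simp [y, hx1, roundDown_of_mem hC1],
    fun j => roundDown_mem hC0 (hx_nonneg j), ?_⟩
  have hloss (i : Fin (m + 1)) (j : Fin (m + 2)) :
      v i (Ico (y j) (x j)) ≤ ENNReal.ofReal ε :=
    haveI : NullSingletonClass (v i) := hatomless i
    measure_Ico_roundDown_le (v i) (fun c' hc' c'' hc'' h h' => hgap c' hc' c'' hc'' h h' i)
      hC0 (hx_nonneg j) hC1 (hx_le_one j)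
  have hfin (i : Fin (m + 1)) (j k : Fin (m + 2)) : v i (Ioo (y j) (y k)) ≠ ⊤ :=
    measure_ne_top_of_subset (Ioo_subset_Icc_self.trans (Icc_subset_Icc
      (le_roundDown hC0 (hx_nonneg j)) ((roundDown_le C _).trans (hx_le_one k))))
      (by simp [hprob])
  have hpiece := Finset.sum_le_sum fun i (_ : i ∈ Finset.univ) =>
    toReal_measure_Ioo_le_add (v i) (roundDown_le C (x (π.symm i).castSucc)) (hfin i _ _)
      (ne_top_of_le_ne_top ENNReal.ofReal_ne_top (hloss i (π.symm i).succ))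
  have htotal := Fintype.sum_le_card_sub_one_mul
    (fun i => (v i (Ico (y (π.symm i).succ) (x (π.symm i).succ))).toReal) (π (Fin.last m))
    (fun i => ENNReal.toReal_le_of_le_ofReal hε.le (hloss i _))
    (by simp [y, Fin.succ_last, hx1, roundDown_of_mem hC1])
  rw [Finset.sum_add_distrib] at hpiece
  simp only [Fintype.card_fin] at htotal
  linarith

/-- Lemma 1(2): if `C ⊆ [0,1]` is a finite set of cut positions
containing `0` and `1` such that every player values the interval between any
two consecutive points of `C` at most `ε`, then any connected division `x` can
be rounded to a division `y` cutting only at points of `C` (with the same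
assignment permutation) while losing at most `(n-1)ε` utilitarian welfare. -/
theorem stmt_10 (n : ℕ) (hn : 0 < n) (v : Fin n → Measure ℝ)
    (hatomless : ∀ i, NoAtoms (v i))
    (hprob : ∀ i, v i (Icc 0 1) = 1) (hsupp : ∀ i, v i (Icc (0 : ℝ) 1)ᶜ = 0)
    (ε : ℝ) (hε : 0 < ε) (C : Finset ℝ)
    (hC0 : (0 : ℝ) ∈ C) (hC1 : (1 : ℝ) ∈ C) (hCsub : ↑C ⊆ Icc (0 : ℝ) 1)
    (hgap : ∀ c' ∈ C, ∀ c'' ∈ C, c' < c'' → (∀ c ∈ C, c ≤ c' ∨ c'' ≤ c) →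
      ∀ i, v i (Ioo c' c'') ≤ ENNReal.ofReal ε)
    (x : Fin (n + 1) → ℝ) (hx : Monotone x) (hx0 : x 0 = 0)
    (hx1 : x (Fin.last n) = 1) (π : Equiv.Perm (Fin n)) :
    ∃ y : Fin (n + 1) → ℝ,
      Monotone y ∧ y 0 = 0 ∧ y (Fin.last n) = 1 ∧ (∀ j, y j ∈ C) ∧
      (∑ i, (v i (Ioo (x (π.symm i).castSucc) (x (π.symm i).succ))).toReal)
          - (n - 1) * ε ≤
        ∑ i, (v i (Ioo (y (π.symm i).castSucc) (y (π.symm i).succ))).toReal :=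
  stmt_10_general n v hatomless hprob ε hε C hC0 hC1 hgap x hx hx0 hx1 π
end

section
/- Let ε > 0 and let C ⊆ [0,1] be a finite set containing 0 and 1 such that for every two consecutive points c' < c'' of C and every player i, v_i((c', c'')) ≤ ε. Then for every connected division x there exists a connected division y, all of whose cut points belong to C and with the same assignment permutation as x, such that eg(y) ≥ eg(x) − ε. (Egalitarian analogue of Lemma 1(2), as noted in the paper.) -/
open MeasureTheory Set

/-!
Round every cut point down to the nearest point of `C`. A cut point then moves only inside one
gap of `C`, which each player values at most `ε`. Player `i`'s old piece `(x_j, x_k)` is covered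
by the new piece `(y_j, y_k)`, the null point `y_k` and the gap part `(y_k, x_k)`, so each player
loses at most `ε`, and hence so does the minimum.
-/

namespace Finset

variable {α : Type*} [LinearOrder α]

/-- The largest element of `C` below `t`; the junk value `t` is used when there is none. -/
def roundDown (C : Finset α) (t : α) : α :=
  if h : (C.filter (· ≤ t)).Nonempty then (C.filter (· ≤ t)).max' h else t

variable {C : Finset α} {c s t : α}

theorem roundDown_spec (h : ∃ c ∈ C, c ≤ t) : C.roundDown t ∈ C ∧ C.roundDown t ≤ t := by
  obtain ⟨c, hc, hct⟩ := h
  have hne : (C.filter (· ≤ t)).Nonempty := ⟨c, mem_filter.2 ⟨hc, hct⟩⟩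
  rw [roundDown, dif_pos hne]
  exact mem_filter.1 ((C.filter (· ≤ t)).max'_mem hne)

theorem roundDown_mem (h : ∃ c ∈ C, c ≤ t) : C.roundDown t ∈ C := (roundDown_spec h).1

theorem roundDown_le (h : ∃ c ∈ C, c ≤ t) : C.roundDown t ≤ t := (roundDown_spec h).2

theorem le_roundDown (hc : c ∈ C) (hct : c ≤ t) : c ≤ C.roundDown t := by
  have hne : (C.filter (· ≤ t)).Nonempty := ⟨c, mem_filter.2 ⟨hc, hct⟩⟩
  rw [roundDown, dif_pos hne]
  exact le_max' _ c (mem_filter.2 ⟨hc, hct⟩)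

theorem roundDown_eq_self (ht : t ∈ C) : C.roundDown t = t :=
  le_antisymm (roundDown_le ⟨t, ht, le_rfl⟩) (le_roundDown ht le_rfl)

theorem roundDown_mono (h : ∃ c ∈ C, c ≤ s) (hst : s ≤ t) : C.roundDown s ≤ C.roundDown t :=
  le_roundDown (roundDown_mem h) ((roundDown_le h).trans hst)

theorem exists_roundDown_consecutive (h : ∃ c ∈ C, t ≤ c) :
    ∃ c'' ∈ C, t ≤ c'' ∧ ∀ c ∈ C, c ≤ C.roundDown t ∨ c'' ≤ c := by
  have hne : (C.filter (t ≤ ·)).Nonempty := by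
    obtain ⟨c, hc, htc⟩ := h
    exact ⟨c, mem_filter.2 ⟨hc, htc⟩⟩
  obtain ⟨hmem, hle⟩ := mem_filter.1 ((C.filter (t ≤ ·)).min'_mem hne)
  refine ⟨_, hmem, hle, fun c hc => ?_⟩
  rcases le_total c t with hct | htc
  · exact Or.inl (le_roundDown hc hct)
  · exact Or.inr (min'_le _ c (mem_filter.2 ⟨hc, htc⟩))

end Finset

section Rounding

open Finset

variable {α : Type*} [LinearOrder α] [MeasurableSpace α] {μ : Measure α} {C : Finset α}

theorem measure_Ioo_roundDown_le {t : α} {δ : ENNReal}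
    (hgap : ∀ c' ∈ C, ∀ c'' ∈ C, c' < c'' → (∀ c ∈ C, c ≤ c' ∨ c'' ≤ c) → μ (Ioo c' c'') ≤ δ)
    (hlow : ∃ c ∈ C, c ≤ t) (hup : ∃ c ∈ C, t ≤ c) : μ (Ioo (C.roundDown t) t) ≤ δ := by
  rcases (roundDown_le hlow).eq_or_lt with heq | hlt
  · simp [heq]
  obtain ⟨c'', hc'', htc'', hconsec⟩ := exists_roundDown_consecutive hup
  calc μ (Ioo (C.roundDown t) t) ≤ μ (Ioo (C.roundDown t) c'') :=
        measure_mono (Ioo_subset_Ioo_right htc'')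
    _ ≤ δ := hgap _ (roundDown_mem hlow) _ hc'' (hlt.trans_le htc'') hconsec

theorem measure_Ioo_le_add [NullSingletonClass μ] {a a' b b' : α} (ha : a' ≤ a) :
    μ (Ioo a b) ≤ μ (Ioo a' b') + μ (Ioo b' b) := by
  have hcover : Ioo a b ⊆ Ioo a' b' ∪ Ico b' b := fun t ht => by
    rcases lt_or_ge t b' with htb | hbt
    · exact Or.inl ⟨ha.trans_lt ht.1, htb⟩
    · exact Or.inr ⟨hbt, ht.2⟩
  calc μ (Ioo a b) ≤ μ (Ioo a' b' ∪ Ico b' b) := measure_mono hcover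
    _ ≤ μ (Ioo a' b') + μ (Ico b' b) := measure_union_le _ _
    _ = μ (Ioo a' b') + μ (Ioo b' b) := by
      rw [measure_congr (Ioo_ae_eq_Ico' (measure_singleton b'))]

theorem toReal_measure_Ioo_sub_le_roundDown [NullSingletonClass μ] {a b : α} {ε : ℝ} (hε : 0 ≤ ε)
    (hgap : ∀ c' ∈ C, ∀ c'' ∈ C, c' < c'' → (∀ c ∈ C, c ≤ c' ∨ c'' ≤ c) →
      μ (Ioo c' c'') ≤ ENNReal.ofReal ε)
    (ha : ∃ c ∈ C, c ≤ a) (hb : ∃ c ∈ C, c ≤ b) (hb' : ∃ c ∈ C, b ≤ c)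
    (hfin : μ (Ioo (C.roundDown a) (C.roundDown b)) ≠ ⊤) :
    (μ (Ioo a b)).toReal - ε ≤ (μ (Ioo (C.roundDown a) (C.roundDown b))).toReal := by
  have hle : μ (Ioo a b) ≤ μ (Ioo (C.roundDown a) (C.roundDown b)) + ENNReal.ofReal ε :=
    (measure_Ioo_le_add (roundDown_le ha)).trans
      (add_le_add_right (measure_Ioo_roundDown_le hgap hb hb') _)
  have := ENNReal.toReal_le_add hle hfin ENNReal.ofReal_ne_top
  rw [ENNReal.toReal_ofReal hε] at this
  linarith

end Rounding

theorem Real.iInf_sub_le_iInf {ι : Type*} {f g : ι → ℝ} {ε : ℝ} (hf : BddBelow (range f))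
    (hε : 0 ≤ ε) (h : ∀ i, f i - ε ≤ g i) : (⨅ i, f i) - ε ≤ ⨅ i, g i := by
  cases isEmpty_or_nonempty ι
  · simp [Real.iInf_of_isEmpty, hε]
  · exact le_ciInf fun i => (sub_le_sub_right (ciInf_le hf i) ε).trans (h i)

theorem stmt_11_general (n : ℕ) (v : Fin n → Measure ℝ)
    (hatomless : ∀ i, NoAtoms (v i))
    (hprob : ∀ i, v i (Icc 0 1) = 1)
    (ε : ℝ) (hε : 0 < ε) (C : Finset ℝ)
    (hC0 : (0 : ℝ) ∈ C) (hC1 : (1 : ℝ) ∈ C)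
    (hgap : ∀ c' ∈ C, ∀ c'' ∈ C, c' < c'' → (∀ c ∈ C, c ≤ c' ∨ c'' ≤ c) →
      ∀ i, v i (Ioo c' c'') ≤ ENNReal.ofReal ε)
    (x : Fin (n + 1) → ℝ) (hx : Monotone x) (hx0 : x 0 = 0)
    (hx1 : x (Fin.last n) = 1) (π : Equiv.Perm (Fin n)) :
    ∃ y : Fin (n + 1) → ℝ,
      Monotone y ∧ y 0 = 0 ∧ y (Fin.last n) = 1 ∧ (∀ j, y j ∈ C) ∧
      (⨅ i, (v i (Ioo (x (π.symm i).castSucc) (x (π.symm i).succ))).toReal) - ε ≤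
        ⨅ i, (v i (Ioo (y (π.symm i).castSucc) (y (π.symm i).succ))).toReal := by
  have hlow : ∀ j, ∃ c ∈ C, c ≤ x j := fun j => ⟨0, hC0, hx0 ▸ hx (Fin.zero_le j)⟩
  have hup : ∀ j, ∃ c ∈ C, x j ≤ c := fun j => ⟨1, hC1, hx1 ▸ hx (Fin.le_last j)⟩
  set y := fun j => C.roundDown (x j)
  have hy : Monotone y := fun j k hjk => Finset.roundDown_mono (hlow j) (hx hjk)
  have hy0 : y 0 = 0 := by simp only [y, hx0, Finset.roundDown_eq_self hC0]
  have hy1 : y (Fin.last n) = 1 := by simp only [y, hx1, Finset.roundDown_eq_self hC1]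
  have hfin : ∀ i j k, v i (Ioo (y j) (y k)) ≠ ⊤ := fun i j k =>
    ne_top_of_le_ne_top (by simp [hprob]) <| measure_mono <| Ioo_subset_Icc_self.trans <|
      Icc_subset_Icc (hy0 ▸ hy (Fin.zero_le j)) (hy1 ▸ hy (Fin.le_last k))
  refine ⟨y, hy, hy0, hy1, fun j => Finset.roundDown_mem (hlow j),
    Real.iInf_sub_le_iInf ⟨0, ?_⟩ hε.le fun i => ?_⟩
  · rintro _ ⟨i, rfl⟩
    exact ENNReal.toReal_nonneg
  · have : NullSingletonClass (v i) := hatomless i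
    exact toReal_measure_Ioo_sub_le_roundDown hε.le (fun c' hc' c'' hc'' hlt hcons =>
      hgap c' hc' c'' hc'' hlt hcons i) (hlow _) (hlow _) (hup _) (hfin i _ _)

/-- egalitarian analogue of Lemma 1(2): if `C ⊆ [0,1]` is a
finite set of cut positions containing `0` and `1` such that every player
values the interval between any two consecutive points of `C` at most `ε`,
then any connected division `x` can be rounded to a division `y` cutting only
at points of `C` (with the same assignment permutation) while losing at most
`ε` egalitarian welfare. -/
theorem stmt_11 (n : ℕ) (hn : 0 < n) (v : Fin n → Measure ℝ)
    (hatomless : ∀ i, NoAtoms (v i))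
    (hprob : ∀ i, v i (Icc 0 1) = 1) (hsupp : ∀ i, v i (Icc (0 : ℝ) 1)ᶜ = 0)
    (ε : ℝ) (hε : 0 < ε) (C : Finset ℝ)
    (hC0 : (0 : ℝ) ∈ C) (hC1 : (1 : ℝ) ∈ C) (hCsub : ↑C ⊆ Icc (0 : ℝ) 1)
    (hgap : ∀ c' ∈ C, ∀ c'' ∈ C, c' < c'' → (∀ c ∈ C, c ≤ c' ∨ c'' ≤ c) →
      ∀ i, v i (Ioo c' c'') ≤ ENNReal.ofReal ε)
    (x : Fin (n + 1) → ℝ) (hx : Monotone x) (hx0 : x 0 = 0)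
    (hx1 : x (Fin.last n) = 1) (π : Equiv.Perm (Fin n)) :
    ∃ y : Fin (n + 1) → ℝ,
      Monotone y ∧ y 0 = 0 ∧ y (Fin.last n) = 1 ∧ (∀ j, y j ∈ C) ∧
      (⨅ i, (v i (Ioo (x (π.symm i).castSucc) (x (π.symm i).succ))).toReal) - ε ≤
        ⨅ i, (v i (Ioo (y (π.symm i).castSucc) (y (π.symm i).succ))).toReal :=
  stmt_11_general n v hatomless hprob ε hε C hC0 hC1 hgap x hx hx0 hx1 π
end

section
/- Let 0 = q_0 < q_1 < ⋯ < q_K = 1, let I_k = (q_{k−1}, q_k), and suppose each density ν_i is constant, equal to d_{i,k} ≥ 0, on each I_k. Then for every t ≥ 0 the following are equivalent: (a) there exists a partition of [0,1] into Lebesgue-measurable sets X_1, …, X_n with ∫_{X_i} ν_i ≥ t for every i; (b) there exist reals x_i^k ∈ [0,1] with Σ_{i=1}^n x_i^k ≤ 1 for every k ∈ {1, …, K} and Σ_{k=1}^K d_{i,k} · (q_k − q_{k−1}) · x_i^k ≥ t for every i. (Correctness of the linear program for maximizing egalitarian welfare with non-connected pieces and piecewise-constant valuations, Theorem 8.) 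-/
open MeasureTheory Set Function

/-!
Off the finitely many (hence null) breakpoints `q k`, player `i`'s density is `d i k` on the
`k`-th interval `I k`, so a measurable `A ⊆ [0, 1]` is worth `∑ k, d i k * |A ∩ I k|` to her.
A partition therefore yields the LP solution `x i k = |X i ∩ I k| / |I k|`. Conversely, an LP
solution is realised by cutting each `I k` into consecutive open intervals of lengths
`x i k * |I k|` and handing everything left over to one player; densities are nonnegative, so
the leftover can only raise her utility.
-/

namespace Fin

variable {m : ℕ}

theorem pairwise_disjoint_on_Ioo_castSucc_succ {β : Type*} [Preorder β] {f : Fin (m + 1) → β}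
    (hf : Monotone f) : Pairwise (Disjoint on fun k : Fin m => Ioo (f k.castSucc) (f k.succ)) :=
  (pairwise_disjoint_on _).2 fun _ _ hkl => disjoint_left.2 fun _ hx hy =>
    (hx.2.trans_le ((hf (succ_le_castSucc_iff.2 hkl)).trans hy.1.le)).false

theorem Icc_diff_iUnion_Ioo_castSucc_succ_subset_range {β : Type*} [LinearOrder β]
    (f : Fin (m + 1) → β) :
    Icc (f 0) (f (last m)) \ ⋃ k : Fin m, Ioo (f k.castSucc) (f k.succ) ⊆ range f := by
  rintro x ⟨⟨h0, hlast⟩, hx⟩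
  by_contra hxf
  have hxf' : ∀ j, f j ≠ x := fun j h => hxf ⟨j, h⟩
  obtain ⟨j, hxj, hjmin⟩ := wellFounded_lt.has_min {j | x < f j}
    ⟨last m, hlast.lt_of_ne (hxf' _).symm⟩
  have hj0 : j ≠ 0 := by rintro rfl; exact hxj.not_ge h0
  obtain ⟨k, rfl⟩ := exists_succ_eq.2 hj0
  have hk : f k.castSucc < x :=
    (not_lt.1 fun h => hjmin _ h castSucc_lt_succ).lt_of_ne (hxf' _)
  exact hx (mem_iUnion.2 ⟨k, hk, hxj⟩)

theorem partialSum_last {M : Type*} [AddCommMonoid M] (f : Fin m → M) :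
    partialSum f (last m) = ∑ i, f i := by
  simp [partialSum, List.take_of_length_le, List.sum_ofFn]

theorem monotone_partialSum {M : Type*} [AddCommMonoid M] [PartialOrder M]
    [IsOrderedAddMonoid M] {f : Fin m → M} (hf : ∀ i, 0 ≤ f i) : Monotone (partialSum f) :=
  monotone_iff_le_succ.2 fun i => by simpa [partialSum_succ] using le_add_of_nonneg_right (hf i)

end Fin

theorem Real.exists_pairwise_disjoint_subset_Ioo_volume_real_eq {n : ℕ} {a b : ℝ}
    {ℓ : Fin n → ℝ} (hℓ : ∀ i, 0 ≤ ℓ i) (hsum : ∑ i, ℓ i ≤ b - a) :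
    ∃ P : Fin n → Set ℝ, (∀ i, MeasurableSet (P i)) ∧ Pairwise (Disjoint on P) ∧
      (∀ i, P i ⊆ Ioo a b) ∧ ∀ i, volume.real (P i) = ℓ i := by
  set c : Fin (n + 1) → ℝ := fun j => a + Fin.partialSum ℓ j
  have hc : Monotone c := fun _ _ h => (add_le_add_iff_left a).2 (Fin.monotone_partialSum hℓ h)
  refine ⟨fun i => Ioo (c i.castSucc) (c i.succ), fun _ => measurableSet_Ioo,
    Fin.pairwise_disjoint_on_Ioo_castSucc_succ hc, fun i => Ioo_subset_Ioo ?_ ?_, fun i => ?_⟩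
  · simpa [c] using hc (Fin.zero_le i.castSucc)
  · calc c i.succ ≤ c (Fin.last n) := hc (Fin.le_last _)
      _ ≤ b := by simp only [c, Fin.partialSum_last]; linarith
  · rw [Real.volume_real_Ioo_of_le (hc Fin.castSucc_lt_succ.le)]
    simp [c, Fin.partialSum_succ]

theorem exists_measurable_partition_of_pairwise_disjoint {α ι : Type*} [MeasurableSpace α]
    [Countable ι] {Y : ι → Set α} (hYm : ∀ i, MeasurableSet (Y i))
    (hYd : Pairwise (Disjoint on Y)) {S : Set α} (hS : MeasurableSet S) (i₀ : ι) :
    ∃ X : ι → Set α, (∀ i, MeasurableSet (X i)) ∧ Pairwise (Disjoint on X) ∧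
      ⋃ i, X i = S ∧ ∀ i, Y i ∩ S ⊆ X i := by
  classical
  set X₀ := S \ ⋃ (j) (_ : j ≠ i₀), Y j
  have hX₀m : MeasurableSet X₀ := hS.diff (.iUnion fun j => .iUnion fun _ => hYm j)
  refine ⟨update (fun i => Y i ∩ S) i₀ X₀, fun i => ?_, fun i j hij => ?_, ?_,
    fun i => ?_⟩
  · rcases eq_or_ne i i₀ with rfl | hi
    · simpa using hX₀m
    · simpa [hi] using (hYm i).inter hS
  · have hX₀Y : ∀ j, j ≠ i₀ → Disjoint X₀ (Y j) := fun j hj =>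
      disjoint_left.2 fun x hx hxj => hx.2 (mem_biUnion hj hxj)
    rcases eq_or_ne i i₀ with rfl | hi
    · simpa [onFun, update_of_ne hij.symm] using (hX₀Y j hij.symm).mono_right inter_subset_left
    rcases eq_or_ne j i₀ with rfl | hj
    · simpa [onFun, update_of_ne hi] using (hX₀Y i hi).symm.mono_left inter_subset_left
    · simpa [onFun, update_of_ne hi, update_of_ne hj] using
        (hYd hij).mono inter_subset_left inter_subset_left
  · refine subset_antisymm (iUnion_subset fun i => ?_) fun x hx => ?_
    · rcases eq_or_ne i i₀ with rfl | hi
      · rw [update_self]; exact sdiff_subset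
      · simp [hi]
    by_cases hY : ∃ j, j ≠ i₀ ∧ x ∈ Y j
    · obtain ⟨j, hj, hxj⟩ := hY
      exact mem_iUnion.2 ⟨j, by simpa [hj] using ⟨hxj, hx⟩⟩
    · exact mem_iUnion.2 ⟨i₀, by simpa [X₀] using ⟨hx, by simpa using hY⟩⟩
  · rcases eq_or_ne i i₀ with rfl | hi
    · intro x ⟨hxi, hxS⟩
      simpa [X₀] using ⟨hxS, fun j hj hxj => disjoint_left.1 (hYd (Ne.symm hj)) hxi hxj⟩
    · simp [hi]

theorem Real.iUnion_inter_Ioo_castSucc_succ_ae_eq {m : ℕ} (q : Fin (m + 1) → ℝ) {A : Set ℝ}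
    (hA : A ⊆ Icc (q 0) (q (Fin.last m))) :
    (⋃ k : Fin m, A ∩ Ioo (q k.castSucc) (q k.succ)) =ᵐ[volume] A := by
  refine (ae_eq_set).2 ⟨by simp [sdiff_eq_empty.2 (iUnion_subset fun k => inter_subset_left)],
    measure_mono_null ?_ ((finite_range q).measure_zero volume)⟩
  rw [← inter_iUnion]
  exact fun x ⟨hxA, hx⟩ => Fin.Icc_diff_iUnion_Ioo_castSucc_succ_subset_range q
    ⟨hA hxA, fun h => hx ⟨hxA, h⟩⟩

theorem setIntegral_eq_sum_of_forall_mem_Ioo_eq {m : ℕ} {q : Fin (m + 1) → ℝ}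
    (hq : Monotone q) {f : ℝ → ℝ} {c : Fin m → ℝ}
    (hf : ∀ k, ∀ x ∈ Ioo (q k.castSucc) (q k.succ), f x = c k)
    {A : Set ℝ} (hAm : MeasurableSet A) (hA : A ⊆ Icc (q 0) (q (Fin.last m))) :
    ∫ x in A, f x = ∑ k, c k * volume.real (A ∩ Ioo (q k.castSucc) (q k.succ)) := by
  have hm : ∀ k : Fin m, MeasurableSet (A ∩ Ioo (q k.castSucc) (q k.succ)) :=
    fun k => hAm.inter measurableSet_Ioo
  have hfk : ∀ k, EqOn f (fun _ => c k) (A ∩ Ioo (q k.castSucc) (q k.succ)) :=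
    fun k x hx => hf k x hx.2
  have hfin : ∀ k : Fin m, volume (A ∩ Ioo (q k.castSucc) (q k.succ)) ≠ ⊤ :=
    fun k => measure_ne_top_of_subset inter_subset_right measure_Ioo_lt_top.ne
  rw [← setIntegral_congr_set (Real.iUnion_inter_Ioo_castSucc_succ_ae_eq q hA),
    integral_iUnion_fintype hm
      ((Fin.pairwise_disjoint_on_Ioo_castSucc_succ hq).mono fun _ _ h =>
        h.mono inter_subset_right inter_subset_right)
      fun k => (integrableOn_const (hfin k)).congr_fun (hfk k).symm (hm k)]
  refine Finset.sum_congr rfl fun k _ => ?_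
  rw [setIntegral_congr_fun (hm k) (hfk k), setIntegral_const, smul_eq_mul, mul_comm]

section Share

variable {K : ℕ} {q : Fin (K + 1) → ℝ}

noncomputable def share (q : Fin (K + 1) → ℝ) (A : Set ℝ) (k : Fin K) : ℝ :=
  volume.real (A ∩ Ioo (q k.castSucc) (q k.succ)) / (q k.succ - q k.castSucc)

theorem share_nonneg (hq : Monotone q) (A : Set ℝ) (k : Fin K) : 0 ≤ share q A k :=
  div_nonneg measureReal_nonneg (sub_nonneg.2 (hq Fin.castSucc_lt_succ.le))

theorem sum_share_le_one (hq : StrictMono q) {ι : Type*} [Fintype ι] {X : ι → Set ℝ}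
    (hXm : ∀ i, MeasurableSet (X i)) (hXd : Pairwise (Disjoint on X)) (k : Fin K) :
    ∑ i, share q (X i) k ≤ 1 := by
  have hlt := hq (Fin.castSucc_lt_succ (i := k))
  simp only [share]
  rw [← Finset.sum_div, div_le_one (sub_pos.2 hlt),
    ← Real.volume_real_Ioo_of_le hlt.le, ← measureReal_iUnion_fintype
      (hXd.mono fun _ _ h => h.mono inter_subset_left inter_subset_left)
      (fun i => (hXm i).inter measurableSet_Ioo)
      fun _ => measure_ne_top_of_subset inter_subset_right measure_Ioo_lt_top.ne]
  exact measureReal_mono (iUnion_subset fun _ => inter_subset_right) measure_Ioo_lt_top.ne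

theorem setIntegral_eq_sum_share (hq : StrictMono q) {f : ℝ → ℝ} {c : Fin K → ℝ}
    (hf : ∀ k, ∀ x ∈ Ioo (q k.castSucc) (q k.succ), f x = c k)
    {A : Set ℝ} (hAm : MeasurableSet A) (hA : A ⊆ Icc (q 0) (q (Fin.last K))) :
    ∫ x in A, f x = ∑ k, c k * (q k.succ - q k.castSucc) * share q A k := by
  rw [setIntegral_eq_sum_of_forall_mem_Ioo_eq hq.monotone hf hAm hA]
  refine Finset.sum_congr rfl fun k _ => ?_
  rw [share]
  field_simp [(sub_pos.2 (hq (Fin.castSucc_lt_succ (i := k)))).ne']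

theorem exists_partition_le_share (hq : StrictMono q) {n : ℕ} {x : Fin n → Fin K → ℝ}
    (hx0 : ∀ i k, 0 ≤ x i k) (hx1 : ∀ k, ∑ i, x i k ≤ 1) (i₀ : Fin n) :
    ∃ X : Fin n → Set ℝ, (∀ i, MeasurableSet (X i)) ∧ Pairwise (Disjoint on X) ∧
      ⋃ i, X i = Icc (q 0) (q (Fin.last K)) ∧ ∀ i k, x i k ≤ share q (X i) k := by
  set I : Fin K → Set ℝ := fun k => Ioo (q k.castSucc) (q k.succ)
  have hlen : ∀ k : Fin K, 0 < q k.succ - q k.castSucc :=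
    fun k => sub_pos.2 (hq Fin.castSucc_lt_succ)
  choose P hPm hPd hPI hPvol using fun k : Fin K =>
    Real.exists_pairwise_disjoint_subset_Ioo_volume_real_eq
      (ℓ := fun i => x i k * (q k.succ - q k.castSucc))
      (fun i => mul_nonneg (hx0 i k) (hlen k).le)
      (by rw [← Finset.sum_mul]; exact mul_le_of_le_one_left (hlen k).le (hx1 k))
  have hYd : Pairwise (Disjoint on fun i => ⋃ k, P k i) := fun i j hij =>
    disjoint_iUnion_left.2 fun k => disjoint_iUnion_right.2 fun l => by
      rcases eq_or_ne k l with rfl | hkl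
      · exact hPd k hij
      · exact (Fin.pairwise_disjoint_on_Ioo_castSucc_succ hq.monotone hkl).mono
          (hPI k i) (hPI l j)
  obtain ⟨X, hXm, hXd, hXu, hYX⟩ := exists_measurable_partition_of_pairwise_disjoint
    (fun i => .iUnion fun k => hPm k i) hYd measurableSet_Icc i₀
  refine ⟨X, hXm, hXd, hXu, fun i k => ?_⟩
  have hIcc : I k ⊆ Icc (q 0) (q (Fin.last K)) := Ioo_subset_Icc_self.trans
    (Icc_subset_Icc (hq.monotone (Fin.zero_le _)) (hq.monotone (Fin.le_last _)))
  have hPX : P k i ⊆ X i ∩ I k :=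
    subset_inter (fun y hy => hYX i ⟨mem_iUnion.2 ⟨k, hy⟩, hIcc (hPI k i hy)⟩) (hPI k i)
  rw [share, le_div_iff₀ (hlen k), ← hPvol]
  exact measureReal_mono hPX (measure_ne_top_of_subset inter_subset_right measure_Ioo_lt_top.ne)

end Share

theorem stmt_16_general (n K : ℕ) (hn : 0 < n)
    (q : Fin (K + 1) → ℝ) (hq : StrictMono q) (hq0 : q 0 = 0)
    (hq1 : q (Fin.last K) = 1)
    (ν : Fin n → ℝ → ℝ) (d : Fin n → Fin K → ℝ) (hd : ∀ i k, 0 ≤ d i k)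
    (hstep : ∀ (i : Fin n) (k : Fin K), ∀ x ∈ Ioo (q k.castSucc) (q k.succ),
      ν i x = d i k)
    (t : ℝ) :
    (∃ X : Fin n → Set ℝ, (∀ i, MeasurableSet (X i)) ∧
      Pairwise (Function.onFun Disjoint X) ∧ (⋃ i, X i) = Icc (0 : ℝ) 1 ∧
      ∀ i, t ≤ ∫ x in X i, ν i x) ↔
    (∃ x : Fin n → Fin K → ℝ, (∀ i k, 0 ≤ x i k) ∧
      (∀ k, ∑ i, x i k ≤ 1) ∧
      ∀ i, t ≤ ∑ k, d i k * (q k.succ - q k.castSucc) * x i k) := by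
  have hunit : Icc (0 : ℝ) 1 = Icc (q 0) (q (Fin.last K)) := by rw [hq0, hq1]
  have hutil : ∀ i (X : Fin n → Set ℝ), (∀ i, MeasurableSet (X i)) →
      ⋃ i, X i = Icc (q 0) (q (Fin.last K)) →
      ∫ x in X i, ν i x = ∑ k, d i k * (q k.succ - q k.castSucc) * share q (X i) k :=
    fun i X hXm hXu => setIntegral_eq_sum_share hq (hstep i) (hXm i) (hXu ▸ subset_iUnion X i)
  rw [hunit]
  constructor
  · rintro ⟨X, hXm, hXd, hXu, hXt⟩
    exact ⟨fun i => share q (X i), fun i => share_nonneg hq.monotone (X i),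
      sum_share_le_one hq hXm hXd, fun i => (hXt i).trans_eq (hutil i X hXm hXu)⟩
  · rintro ⟨x, hx0, hx1, hxt⟩
    obtain ⟨X, hXm, hXd, hXu, hxX⟩ := exists_partition_le_share hq hx0 hx1 ⟨0, hn⟩
    refine ⟨X, hXm, hXd, hXu, fun i => (hxt i).trans ?_⟩
    rw [hutil i X hXm hXu]
    exact Finset.sum_le_sum fun k _ => mul_le_mul_of_nonneg_left (hxX i k)
      (mul_nonneg (hd i k) (sub_nonneg.2 (hq.monotone Fin.castSucc_lt_succ.le)))

/-- correctness of the linear program for maximizing egalitarian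
welfare with non-connected pieces and piecewise-constant valuations
(Theorem 8): every player can be guaranteed utility `t` by a measurable
partition of `[0,1]` iff the LP with fractional interval shares `x i k` has a
feasible solution of value `t`. -/
theorem stmt_16 (n K : ℕ) (hn : 0 < n) (hK : 0 < K)
    (q : Fin (K + 1) → ℝ) (hq : StrictMono q) (hq0 : q 0 = 0)
    (hq1 : q (Fin.last K) = 1)
    (ν : Fin n → ℝ → ℝ) (d : Fin n → Fin K → ℝ) (hd : ∀ i k, 0 ≤ d i k)
    (hstep : ∀ (i : Fin n) (k : Fin K), ∀ x ∈ Ioo (q k.castSucc) (q k.succ),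
      ν i x = d i k)
    (t : ℝ) (ht : 0 ≤ t) :
    (∃ X : Fin n → Set ℝ, (∀ i, MeasurableSet (X i)) ∧
      Pairwise (Function.onFun Disjoint X) ∧ (⋃ i, X i) = Icc (0 : ℝ) 1 ∧
      ∀ i, t ≤ ∫ x in X i, ν i x) ↔
    (∃ x : Fin n → Fin K → ℝ, (∀ i k, 0 ≤ x i k) ∧
      (∀ k, ∑ i, x i k ≤ 1) ∧
      ∀ i, t ≤ ∑ k, d i k * (q k.succ - q k.castSucc) * x i k) :=
  stmt_16_general n K hn q hq hq0 hq1 ν d hd hstep t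
end

section
/- For every n ≥ 1, every ε ∈ (0,1), and every finite set of points 0 = p_0 < p_1 < ⋯ < p_k = 1, there exist atomless Borel probability measures v'_1, …, v'_n on [0,1], given by piecewise-constant densities, such that: (a) v'_i((p_j, p_{j'})) = p_{j'} − p_j for every player i and all 0 ≤ j ≤ j' ≤ k (so on intervals with endpoints among the p_j, every v'_i agrees with the uniform measure); (b) there exists a partition of [0,1] into measurable sets X_1, …, X_n with v'_i(X_i) ≥ 1 − ε for every i, hence with utilitarian welfare at least (1−ε)n; while (c) every assignment of pairwise disjoint intervals with endpoints among p_0, …, p_k, one interval per player, yields utilitarian welfare Σ_i v'_i(own interval) ≤ 1. (The 'sliver' construction underlying Theorem 9: no deterministic oracle algorithm approximates utilitarian or egalitarian welfare with non-connected pieces within a factor n − ε.) -/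
/-!
Cut every `[p_j, p_{j+1}]` into `n` equal slivers and let player `i` have density `n` on the
union `S_i` of the `i`-th slivers. Then each `v'_i` gives every `[p_j, p_{j+1}]` its length, so it
agrees with Lebesgue measure on intervals with endpoints among the `p_j`, and the welfare of
disjoint such intervals is at most their total length `1`. Yet `v'_i (S_i) = 1` and the `S_i` are
disjoint.
-/

open MeasureTheory Set
open scoped ENNReal

lemma measure_Ico_eq_of_Ico_succ {α : Type*} [LinearOrder α] [MeasurableSpace α]
    [TopologicalSpace α] [OrderClosedTopology α] [OpensMeasurableSpace α] {μ ν : Measure α}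
    {P : ℕ → α} (hP : Monotone P)
    (h : ∀ q, μ (Ico (P q) (P (q + 1))) = ν (Ico (P q) (P (q + 1)))) {a b : ℕ} (hab : a ≤ b) :
    μ (Ico (P a) (P b)) = ν (Ico (P a) (P b)) := by
  induction b, hab using Nat.le_induction with
  | base => simp
  | succ b hab ih =>
    rw [← Ico_union_Ico_eq_Ico (hP hab) (hP b.le_succ),
      measure_union Ico_disjoint_Ico_same measurableSet_Ico,
      measure_union Ico_disjoint_Ico_same measurableSet_Ico, ih, h]

lemma sum_measure_le_of_pairwise_disjoint {ι α : Type*} [Fintype ι] [MeasurableSpace α]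
    (μ : Measure α) {T : ι → Set α} {U : Set α} (hT : ∀ i, MeasurableSet (T i))
    (hd : Pairwise (Function.onFun Disjoint T)) (hTU : ∀ i, T i ⊆ U) : ∑ i, μ (T i) ≤ μ U :=
  calc ∑ i, μ (T i) = μ (⋃ i, T i) := by rw [measure_iUnion hd hT, tsum_fintype]
    _ ≤ μ U := measure_mono (iUnion_subset hTU)

lemma Fin.clamp_val_eq_self {k : ℕ} (j : Fin (k + 1)) : Fin.clamp j k = j :=
  Fin.ext (min_eq_left (Nat.lt_succ_iff.1 j.2))

lemma exists_partition_of_pairwise_disjoint {ι α : Type*} [MeasurableSpace α] [Countable ι]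
    (i₀ : ι) {S : ι → Set α} {U : Set α} (hS : ∀ i, MeasurableSet (S i)) (hU : MeasurableSet U)
    (hSU : ∀ i, S i ⊆ U) (hdisj : Pairwise (Function.onFun Disjoint S)) :
    ∃ X : ι → Set α, (∀ i, MeasurableSet (X i)) ∧ Pairwise (Function.onFun Disjoint X) ∧
      ⋃ i, X i = U ∧ ∀ i, S i ⊆ X i := by
  classical
  set R := U \ ⋃ j, S j
  have hR : ∀ i, Disjoint (S i) R := fun i =>
    disjoint_sdiff_right.mono_right (sdiff_subset_sdiff_right (subset_iUnion S i))
  -- the part of `U` not covered by the `S i` is added to `S i₀`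
  set A : ι → Set α := fun i => if i = i₀ then R else ∅
  have hAR : ∀ i, A i ⊆ R := fun i => by
    by_cases hi : i = i₀ <;> simp [A, hi]
  have hA : Pairwise (Function.onFun Disjoint A) := fun i j hij => by
    by_cases hi : i = i₀
    · simp [Function.onFun, A, hi, Ne.symm (hi ▸ hij)]
    · simp [Function.onFun, A, hi]
  refine ⟨fun i => S i ∪ A i, fun i => (hS i).union ?_, fun i j hij => ?_, ?_,
    fun i => subset_union_left⟩
  · by_cases hi : i = i₀
    · simpa [A, hi] using hU.diff (.iUnion hS)
    · simp [A, hi]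
  · exact Disjoint.union_left ((hdisj hij).union_right ((hR i).mono_right (hAR j)))
      ((((hR j).mono_right (hAR i)).symm).union_right (hA hij))
  · refine Subset.antisymm (iUnion_subset fun i => union_subset (hSU i) ((hAR i).trans
      sdiff_subset)) fun x hx => ?_
    by_cases hxS : x ∈ ⋃ j, S j
    · obtain ⟨j, hj⟩ := mem_iUnion.1 hxS
      exact mem_iUnion.2 ⟨j, Or.inl hj⟩
    · exact mem_iUnion.2 ⟨i₀, Or.inr (by simp [A, R, hx, hxS])⟩

namespace Sliver

section Subdivision

variable {P : ℕ → ℝ} {n : ℕ}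

noncomputable def subdivision (P : ℕ → ℝ) (n m : ℕ) : ℝ :=
  P (m / n) + ((m % n : ℕ) : ℝ) / n * (P (m / n + 1) - P (m / n))

lemma subdivision_mul_add (hn : 0 < n) (q : ℕ) {i : ℕ} (hi : i ≤ n) :
    subdivision P n (n * q + i) = P q + (i : ℝ) / n * (P (q + 1) - P q) := by
  rcases hi.lt_or_eq with hlt | heq
  · simp only [subdivision, Nat.mul_add_div hn, Nat.div_eq_of_lt hlt, Nat.mul_add_mod,
      Nat.mod_eq_of_lt hlt, add_zero]
  · have hn' : (n : ℝ) ≠ 0 := by positivity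
    rw [heq, ← Nat.mul_succ, subdivision, Nat.mul_div_cancel_left _ hn, Nat.mul_mod_right,
      div_self hn']
    simp

lemma subdivision_mul (hn : 0 < n) (q : ℕ) : subdivision P n (n * q) = P q := by
  simpa using subdivision_mul_add (P := P) hn q (Nat.zero_le n)

lemma subdivision_succ_sub (hn : 0 < n) (q : ℕ) {i : ℕ} (hi : i < n) :
    subdivision P n (n * q + i + 1) - subdivision P n (n * q + i) = (P (q + 1) - P q) / n := by
  rw [add_assoc, subdivision_mul_add hn q (Nat.succ_le_of_lt hi),
    subdivision_mul_add hn q hi.le]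
  push_cast
  ring

lemma monotone_subdivision (hP : Monotone P) (hn : 0 < n) : Monotone (subdivision P n) := by
  refine monotone_nat_of_le_succ fun m => ?_
  have hd := subdivision_succ_sub (P := P) hn (m / n) (Nat.mod_lt m hn)
  rw [Nat.div_add_mod] at hd
  have : 0 ≤ (P (m / n + 1) - P (m / n)) / n :=
    div_nonneg (sub_nonneg.2 (hP (by omega))) n.cast_nonneg
  linarith

def cell (P : ℕ → ℝ) (n m : ℕ) : Set ℝ := Ico (subdivision P n m) (subdivision P n (m + 1))

lemma cell_subset_Ico (hP : Monotone P) (hn : 0 < n) (q : ℕ) {i : ℕ} (hi : i < n) :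
    cell P n (n * q + i) ⊆ Ico (P q) (P (q + 1)) := by
  have hmono := monotone_subdivision hP hn
  rw [← subdivision_mul (P := P) hn q, ← subdivision_mul (P := P) hn (q + 1), Nat.mul_succ]
  exact Ico_subset_Ico (hmono (by omega)) (hmono (by omega))

lemma pairwise_disjoint_cell (hP : Monotone P) (hn : 0 < n) :
    Pairwise (Function.onFun Disjoint (cell P n)) := by
  have h := (monotone_subdivision hP hn).pairwise_disjoint_on_Ico_succ
  simp only [Order.succ_eq_add_one] at h
  exact h

def sliver (P : ℕ → ℝ) (n : ℕ) (i : Fin n) : Set ℝ := ⋃ q, cell P n (n * q + i)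

lemma measurableSet_sliver (i : Fin n) : MeasurableSet (sliver P n i) :=
  .iUnion fun _ => measurableSet_Ico

lemma mem_sliver_iff (hP : Monotone P) (hn : 0 < n) {m : ℕ} {x : ℝ} (hx : x ∈ cell P n m)
    (i : Fin n) : x ∈ sliver P n i ↔ m % n = i := by
  constructor
  · rintro ⟨_, ⟨q, rfl⟩, hxq⟩
    have hm : n * q + i = m := by
      by_contra hne
      exact (pairwise_disjoint_cell hP hn hne).ne_of_mem hxq hx rfl
    rw [← hm, Nat.mul_add_mod, Nat.mod_eq_of_lt i.isLt]
  · intro hm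
    refine mem_iUnion.2 ⟨m / n, ?_⟩
    rwa [← hm, Nat.div_add_mod]

lemma pairwise_disjoint_sliver (hP : Monotone P) (hn : 0 < n) :
    Pairwise (Function.onFun Disjoint (sliver P n)) := by
  intro i j hij
  refine Set.disjoint_left.2 fun x hxi hxj => hij ?_
  obtain ⟨q, hq⟩ := mem_iUnion.1 hxi
  exact Fin.ext
    (((mem_sliver_iff hP hn hq i).1 hxi).symm.trans ((mem_sliver_iff hP hn hq j).1 hxj))

lemma sliver_inter_Ico (hP : Monotone P) (hn : 0 < n) (i : Fin n) (q : ℕ) :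
    sliver P n i ∩ Ico (P q) (P (q + 1)) = cell P n (n * q + i) := by
  refine Subset.antisymm ?_ fun x hx =>
    ⟨mem_iUnion.2 ⟨q, hx⟩, cell_subset_Ico hP hn q i.isLt hx⟩
  rintro x ⟨hxS, hxq⟩
  obtain ⟨q', hq'⟩ := mem_iUnion.1 hxS
  have : q' = q := by
    by_contra hne
    have hdisj : Disjoint (Ico (P q') (P (q' + 1))) (Ico (P q) (P (q + 1))) := by
      simpa [Order.succ_eq_add_one] using hP.pairwise_disjoint_on_Ico_succ hne
    exact hdisj.ne_of_mem (cell_subset_Ico hP hn q' i.isLt hq') hxq rfl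
  rwa [← this]

lemma sliver_subset_Ico (hP : Monotone P) (hn : 0 < n) {k : ℕ} (hPk : ∀ j, P j ≤ P k)
    (i : Fin n) : sliver P n i ⊆ Ico (P 0) (P k) :=
  iUnion_subset fun q => (cell_subset_Ico hP hn q i.isLt).trans
    (Ico_subset_Ico (hP (Nat.zero_le q)) (hPk _))

end Subdivision

section SliverMeasure

variable {P : ℕ → ℝ} {n : ℕ}

noncomputable def sliverDensity (P : ℕ → ℝ) (n : ℕ) (i : Fin n) : ℝ → ℝ≥0∞ :=
  (sliver P n i).indicator fun _ => n

noncomputable def sliverMeasure (P : ℕ → ℝ) (n : ℕ) (i : Fin n) : Measure ℝ :=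
  (n : ℝ≥0∞) • volume.restrict (sliver P n i)

lemma withDensity_sliverDensity (i : Fin n) :
    volume.withDensity (sliverDensity P n i) = sliverMeasure P n i := by
  rw [sliverDensity, withDensity_indicator (measurableSet_sliver i), withDensity_const,
    sliverMeasure]

instance (i : Fin n) : NullSingletonClass (sliverMeasure P n i) :=
  withDensity_sliverDensity (P := P) i ▸ nullSingletonClass_withDensity _

lemma sliverMeasure_apply (i : Fin n) (T : Set ℝ) :
    sliverMeasure P n i T = n * volume (T ∩ sliver P n i) := by
  rw [sliverMeasure, Measure.smul_apply, Measure.restrict_apply' (measurableSet_sliver i),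
    smul_eq_mul]

lemma sliverMeasure_Ico (hP : Monotone P) (hn : 0 < n) (i : Fin n) {a b : ℕ} (hab : a ≤ b) :
    sliverMeasure P n i (Ico (P a) (P b)) = volume (Ico (P a) (P b)) := by
  refine measure_Ico_eq_of_Ico_succ hP (fun q => ?_) hab
  have hn' : (n : ℝ) ≠ 0 := by positivity
  rw [sliverMeasure_apply, inter_comm, sliver_inter_Ico hP hn, cell, Real.volume_Ico,
    Real.volume_Ico, subdivision_succ_sub hn q i.isLt, ← ENNReal.ofReal_natCast,
    ← ENNReal.ofReal_mul n.cast_nonneg, mul_div_cancel₀ _ hn']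

lemma sliverMeasure_sliver (hP : Monotone P) (hn : 0 < n) {k : ℕ} (hPk : ∀ j, P j ≤ P k)
    (i : Fin n) : sliverMeasure P n i (sliver P n i) = volume (Ico (P 0) (P k)) := by
  rw [← sliverMeasure_Ico hP hn i (Nat.zero_le k), sliverMeasure_apply, sliverMeasure_apply,
    inter_self, inter_eq_right.2 (sliver_subset_Ico hP hn hPk i)]

lemma sliverDensity_eq_of_mem_cell (hP : Monotone P) (hn : 0 < n) (i : Fin n) {m : ℕ}
    {x y : ℝ} (hx : x ∈ cell P n m) (hy : y ∈ cell P n m) :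
    sliverDensity P n i x = sliverDensity P n i y := by
  simp only [sliverDensity, indicator, mem_sliver_iff hP hn hx, mem_sliver_iff hP hn hy]

lemma exists_steps_sliverDensity (hP : Monotone P) (hn : 0 < n) (k : ℕ) (i : Fin n) :
    ∃ (L : ℕ) (r : Fin (L + 1) → ℝ), Monotone r ∧ r 0 = P 0 ∧ r (Fin.last L) = P k ∧
      ∀ j : Fin L, ∀ x ∈ Ioo (r j.castSucc) (r j.succ), ∀ y ∈ Ioo (r j.castSucc) (r j.succ),
        sliverDensity P n i x = sliverDensity P n i y := by
  refine ⟨k * n, fun m => subdivision P n m,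
    (monotone_subdivision hP hn).comp Fin.val_strictMono.monotone,
    by simpa using subdivision_mul (P := P) hn 0,
    by simpa [mul_comm] using subdivision_mul (P := P) hn k,
    fun j x hx y hy => sliverDensity_eq_of_mem_cell hP hn i (Ioo_subset_Ico_self hx)
      (Ioo_subset_Ico_self hy)⟩

end SliverMeasure

end Sliver

open Sliver in
theorem stmt_17_general (n k : ℕ) (hn : 1 ≤ n) (ε : ℝ) (hε0 : 0 < ε)
    (p : Fin (k + 1) → ℝ) (hp : StrictMono p) (hp0 : p 0 = 0)
    (hp1 : p (Fin.last k) = 1) :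
    ∃ (v' : Fin n → Measure ℝ) (ν : Fin n → ℝ → ENNReal),
      (∀ i, v' i = MeasureTheory.volume.withDensity (ν i)) ∧
      -- each density is a step function supported in [0,1]
      (∀ i, (∀ x, x ∉ Icc (0 : ℝ) 1 → ν i x = 0) ∧
        ∃ (L : ℕ) (r : Fin (L + 1) → ℝ), Monotone r ∧ r 0 = 0 ∧
          r (Fin.last L) = 1 ∧
          ∀ j : Fin L, ∀ x ∈ Ioo (r j.castSucc) (r j.succ),
            ∀ y ∈ Ioo (r j.castSucc) (r j.succ), ν i x = ν i y) ∧
      (∀ i, NoAtoms (v' i)) ∧ (∀ i, v' i (Icc (0 : ℝ) 1) = 1) ∧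
      -- (a) on intervals with endpoints among the p_j, v'_i is uniform
      (∀ (i : Fin n) (j j' : Fin (k + 1)), j ≤ j' →
        v' i (Ioo (p j) (p j')) = ENNReal.ofReal (p j' - p j)) ∧
      -- (b) a partition of [0,1] with every utility ≥ 1 - ε
      (∃ X : Fin n → Set ℝ, (∀ i, MeasurableSet (X i)) ∧
        Pairwise (Function.onFun Disjoint X) ∧ (⋃ i, X i) = Icc (0 : ℝ) 1 ∧
        (∀ i, ENNReal.ofReal (1 - ε) ≤ v' i (X i)) ∧
        ENNReal.ofReal ((1 - ε) * n) ≤ ∑ i, v' i (X i)) ∧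
      -- (c) any disjoint intervals with endpoints among the p_j give welfare ≤ 1
      (∀ a b : Fin n → Fin (k + 1), (∀ i, a i ≤ b i) →
        Pairwise (Function.onFun Disjoint fun i => Ioo (p (a i)) (p (b i))) →
        ∑ i, v' i (Ioo (p (a i)) (p (b i))) ≤ 1) := by
  -- `p` extended by `1` beyond `k`, so that the slivers over `q ≥ k` are empty
  set P : ℕ → ℝ := fun j => p (Fin.clamp j k)
  have hP : Monotone P := hp.monotone.comp Fin.clamp_monotone
  have hPp (j : Fin (k + 1)) : P j = p j := congrArg p (Fin.clamp_val_eq_self j)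
  have hPk (j : ℕ) : P j ≤ P k :=
    hp.monotone (by simp [Fin.clamp_eq_last k k le_rfl, Fin.le_last])
  have hP0 : P 0 = 0 := (hPp 0).trans hp0
  have hP1 : P k = 1 := (hPp (Fin.last k)).trans hp1
  have hn' : 0 < n := hn
  have hsliver (i : Fin n) : sliver P n i ⊆ Icc 0 1 :=
    hP0 ▸ hP1 ▸ (sliver_subset_Ico hP hn' hPk i).trans Ico_subset_Icc_self
  have hIoo (i : Fin n) (j j' : Fin (k + 1)) (hj : j ≤ j') :
      sliverMeasure P n i (Ioo (p j) (p j')) = ENNReal.ofReal (p j' - p j) := by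
    rw [measure_congr Ioo_ae_eq_Ico, ← hPp, ← hPp, sliverMeasure_Ico hP hn' i hj, Real.volume_Ico]
  obtain ⟨X, hXm, hXd, hXU, hSX⟩ := exists_partition_of_pairwise_disjoint (⟨0, hn⟩ : Fin n)
    measurableSet_sliver measurableSet_Icc hsliver (pairwise_disjoint_sliver hP hn')
  have hX (i : Fin n) : ENNReal.ofReal (1 - ε) ≤ sliverMeasure P n i (X i) :=
    calc ENNReal.ofReal (1 - ε) ≤ 1 := ENNReal.ofReal_le_one.2 (by linarith)
      _ = sliverMeasure P n i (sliver P n i) := by simp [sliverMeasure_sliver hP hn' hPk, hP0, hP1]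
      _ ≤ sliverMeasure P n i (X i) := measure_mono (hSX i)
  refine ⟨sliverMeasure P n, sliverDensity P n, fun i => (withDensity_sliverDensity i).symm,
    fun i => ⟨fun x hx => indicator_of_notMem (fun hxS => hx (hsliver i hxS)) _, ?_⟩,
    fun i => inferInstanceAs (NullSingletonClass _), fun i => ?_, hIoo,
    ⟨X, hXm, hXd, hXU, hX, ?_⟩, fun a b hab hdisj => ?_⟩
  · simpa [hP0, hP1] using exists_steps_sliverDensity hP hn' k i
  · rw [← measure_congr Ioo_ae_eq_Icc]
    simpa [hp0, hp1] using hIoo i 0 (Fin.last k) (Fin.zero_le _)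
  · simpa [mul_comm] using Finset.card_nsmul_le_sum Finset.univ _ _ fun i _ => hX i
  · simp only [hIoo _ _ _ (hab _), ← Real.volume_Ioo]
    simpa using sum_measure_le_of_pairwise_disjoint volume (fun _ => measurableSet_Ioo) hdisj
      fun i => Ioo_subset_Icc_self.trans (Icc_subset_Icc
        (hp0.symm.trans_le (hp.monotone (Fin.zero_le _)))
        ((hp.monotone (Fin.le_last _)).trans_eq hp1))

/-- the 'sliver' construction underlying Theorem 9.  For any
`n ≥ 1`, `ε ∈ (0,1)` and finite set of points `0 = p_0 < ⋯ < p_k = 1`, there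
are atomless probability measures `v'_i`, given by piecewise-constant
densities, that (a) agree with the uniform (Lebesgue) measure on every interval
with endpoints among the `p_j`; (b) admit a measurable partition of `[0,1]`
giving each player value at least `1 - ε` (hence utilitarian welfare at least
`(1-ε)·n`); while (c) every family of pairwise disjoint intervals with
endpoints among the `p_j`, one per player, has utilitarian welfare at most 1. -/
theorem stmt_17 (n k : ℕ) (hn : 1 ≤ n) (ε : ℝ) (hε0 : 0 < ε) (hε1 : ε < 1)
    (p : Fin (k + 1) → ℝ) (hp : StrictMono p) (hp0 : p 0 = 0)
    (hp1 : p (Fin.last k) = 1) :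
    ∃ (v' : Fin n → Measure ℝ) (ν : Fin n → ℝ → ENNReal),
      (∀ i, v' i = MeasureTheory.volume.withDensity (ν i)) ∧
      -- each density is a step function supported in [0,1]
      (∀ i, (∀ x, x ∉ Icc (0 : ℝ) 1 → ν i x = 0) ∧
        ∃ (L : ℕ) (r : Fin (L + 1) → ℝ), Monotone r ∧ r 0 = 0 ∧
          r (Fin.last L) = 1 ∧
          ∀ j : Fin L, ∀ x ∈ Ioo (r j.castSucc) (r j.succ),
            ∀ y ∈ Ioo (r j.castSucc) (r j.succ), ν i x = ν i y) ∧
      (∀ i, NoAtoms (v' i)) ∧ (∀ i, v' i (Icc (0 : ℝ) 1) = 1) ∧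
      -- (a) on intervals with endpoints among the p_j, v'_i is uniform
      (∀ (i : Fin n) (j j' : Fin (k + 1)), j ≤ j' →
        v' i (Ioo (p j) (p j')) = ENNReal.ofReal (p j' - p j)) ∧
      -- (b) a partition of [0,1] with every utility ≥ 1 - ε
      (∃ X : Fin n → Set ℝ, (∀ i, MeasurableSet (X i)) ∧
        Pairwise (Function.onFun Disjoint X) ∧ (⋃ i, X i) = Icc (0 : ℝ) 1 ∧
        (∀ i, ENNReal.ofReal (1 - ε) ≤ v' i (X i)) ∧
        ENNReal.ofReal ((1 - ε) * n) ≤ ∑ i, v' i (X i)) ∧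
      -- (c) any disjoint intervals with endpoints among the p_j give welfare ≤ 1
      (∀ a b : Fin n → Fin (k + 1), (∀ i, a i ≤ b i) →
        Pairwise (Function.onFun Disjoint fun i => Ioo (p (a i)) (p (b i))) →
        ∑ i, v' i (Ioo (p (a i)) (p (b i))) ≤ 1) :=
  stmt_17_general n k hn ε hε0 p hp hp0 hp1
end
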